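/- arXiv:1805.11430 — 2 statements merged into one kernel-verified Lean document; each statement's English description precedes it below -/
import Mathlib

section
/- Let β = (1+√5)/2 and let T₀, T₁ be the lazy and greedy β-transformations on [0,β] (T₁x = βx for x < 1/β, βx−1 otherwise; T₀x = βx for x ≤ 1, βx−1 otherwise), chosen with probabilities p and 1−p. Then the function h(x) = (β²/(1+β²))·((1−p)β·1_{[0,β−1]}(x) + 1_{(β−1,1)}(x) + pβ·1_{[1,β]}(x)) is a fixed point of the random Perron–Frobenius operator: for a.e. x, p·(1/β)·Σ_{y: T₀y=x} h(y) + (1−p)·(1/β)·Σ_{y: T₁y=x} h(y) = h(x). -/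
/-!
Both maps have slope `β`, so every point of `(0, β)` has one or two preimages, `x/β` and `(x+1)/β`,
and the Perron–Frobenius operator is a finite sum. Off the breakpoints `β − 1` and `1` the fixed-point
equation reduces, on each of the three intervals where `h` is constant, to the identity `β² = β + 1`.
-/

open Set MeasureTheory

noncomputable section

/-- the golden mean `β = (1+√5)/2`. -/
def gβ : ℝ := (1 + Real.sqrt 5) / 2

/-- the lazy β-transformation on `[0,β]` (for the golden mean,
`z₂ = 1/(β(β−1)) = 1`): `T₀ x = βx` for `x ≤ 1`, `βx − 1` otherwise. -/
def Tlazy (x : ℝ) : ℝ := if x ≤ 1 then gβ * x else gβ * x - 1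

/-- the greedy β-transformation on `[0,β]`: `T₁ x = βx` for `x < 1/β`,
`βx − 1` otherwise. -/
def Tgreedy (x : ℝ) : ℝ := if x < 1 / gβ then gβ * x else gβ * x - 1

/-- the invariant density
`h = (β²/(1+β²))·((1−p)β·1_{[0,β−1]} + 1_{(β−1,1)} + pβ·1_{[1,β]})`. -/
def hGold (p x : ℝ) : ℝ :=
  gβ ^ 2 / (1 + gβ ^ 2) *
    ((1 - p) * gβ * (Icc (0:ℝ) (gβ - 1)).indicator (fun _ => (1:ℝ)) x +
      (Ioo (gβ - 1) 1).indicator (fun _ => (1:ℝ)) x +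
      p * gβ * (Icc (1:ℝ) gβ).indicator (fun _ => (1:ℝ)) x)

lemma gβ_sq : gβ ^ 2 = gβ + 1 := Real.goldenRatio_sq

lemma gβ_pos : 0 < gβ := Real.goldenRatio_pos

lemma one_lt_gβ : 1 < gβ := Real.one_lt_goldenRatio

lemma gβ_lt_two : gβ < 2 := Real.goldenRatio_lt_two

lemma one_div_gβ : 1 / gβ = gβ - 1 := by
  rw [div_eq_iff gβ_pos.ne']
  linear_combination -gβ_sq

lemma div_gβ (x : ℝ) : x / gβ = (gβ - 1) * x := by
  rw [div_eq_mul_one_div, one_div_gβ, mul_comm]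

lemma div_gβ_ne_add_one_div_gβ (x : ℝ) : x / gβ ≠ (x + 1) / gβ := by
  rw [Ne, div_left_inj' gβ_pos.ne']
  linarith

lemma tsum_pair {α β : Type*} [AddCommMonoid α] [TopologicalSpace α] [DecidableEq β] {a b : β}
    (hab : a ≠ b) (f : β → α) : ∑' x : ({a, b} : Set β), f x = f a + f b := by
  rw [← Finset.coe_pair, Finset.tsum_subtype', Finset.sum_pair hab]

def fiber (T : ℝ → ℝ) (x : ℝ) : Set ℝ := {y | y ∈ Icc 0 gβ ∧ T y = x}

def randomPF (p : ℝ) (f : ℝ → ℝ) (x : ℝ) : ℝ :=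
  p * (1 / gβ) * (∑' y : fiber Tlazy x, f y) + (1 - p) * (1 / gβ) * (∑' y : fiber Tgreedy x, f y)

section Fibers

variable {x : ℝ}

lemma fiber_Tlazy_of_lt (h0 : 0 < x) (h1 : x < gβ - 1) : fiber Tlazy x = {x / gβ} := by
  have := one_lt_gβ
  ext y
  simp only [fiber, Tlazy, mem_ofPred_eq, mem_Icc, mem_singleton_iff, eq_div_iff gβ_pos.ne']
  constructor
  · rintro ⟨⟨hy0, -⟩, hy⟩
    split_ifs at hy with hy1
    · linarith
    · nlinarith
  · rintro rfl
    have hy1 : y ≤ 1 := by nlinarith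
    exact ⟨⟨by nlinarith, by nlinarith⟩, by rw [if_pos hy1, mul_comm]⟩

lemma fiber_Tlazy_of_gt (h0 : gβ - 1 < x) (h1 : x < gβ) :
    fiber Tlazy x = {x / gβ, (x + 1) / gβ} := by
  have := one_lt_gβ; have := gβ_sq
  ext y
  simp only [fiber, Tlazy, mem_ofPred_eq, mem_Icc, mem_insert_iff, mem_singleton_iff,
    eq_div_iff gβ_pos.ne']
  constructor
  · rintro ⟨-, hy⟩
    split_ifs at hy
    · left; linarith
    · right; linarith
  · rintro (rfl | hy)
    · have hy1 : y ≤ 1 := by nlinarith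
      exact ⟨⟨by nlinarith, by nlinarith⟩, by rw [if_pos hy1, mul_comm]⟩
    · obtain rfl : x = y * gβ - 1 := by linarith
      have hy1 : ¬y ≤ 1 := by nlinarith
      exact ⟨⟨by nlinarith, by nlinarith⟩, by rw [if_neg hy1, mul_comm]⟩

lemma fiber_Tgreedy_of_lt (h0 : 0 < x) (h1 : x < 1) :
    fiber Tgreedy x = {x / gβ, (x + 1) / gβ} := by
  have := one_lt_gβ; have := gβ_sq
  ext y
  simp only [fiber, Tgreedy, one_div_gβ, mem_ofPred_eq, mem_Icc, mem_insert_iff,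
    mem_singleton_iff, eq_div_iff gβ_pos.ne']
  constructor
  · rintro ⟨-, hy⟩
    split_ifs at hy
    · left; linarith
    · right; linarith
  · rintro (rfl | hy)
    · have hy1 : y < gβ - 1 := by nlinarith
      exact ⟨⟨by nlinarith, by nlinarith⟩, by rw [if_pos hy1, mul_comm]⟩
    · obtain rfl : x = y * gβ - 1 := by linarith
      have hy1 : ¬y < gβ - 1 := by nlinarith
      exact ⟨⟨by nlinarith, by nlinarith⟩, by rw [if_neg hy1, mul_comm]⟩

lemma fiber_Tgreedy_of_gt (h0 : 1 < x) (h1 : x < gβ) : fiber Tgreedy x = {(x + 1) / gβ} := by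
  have := one_lt_gβ; have := gβ_sq
  ext y
  simp only [fiber, Tgreedy, one_div_gβ, mem_ofPred_eq, mem_Icc, mem_singleton_iff,
    eq_div_iff gβ_pos.ne']
  constructor
  · rintro ⟨-, hy⟩
    split_ifs at hy with hy1
    · nlinarith
    · linarith
  · intro hy
    obtain rfl : x = y * gβ - 1 := by linarith
    have hy1 : ¬y < gβ - 1 := by nlinarith
    exact ⟨⟨by nlinarith, by nlinarith⟩, by rw [if_neg hy1, mul_comm]⟩

end Fibers

section Density

variable {p x : ℝ}

lemma hGold_of_mem_Icc_zero_gβ_sub_one (hx : x ∈ Icc 0 (gβ - 1)) :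
    hGold p x = gβ ^ 2 / (1 + gβ ^ 2) * ((1 - p) * gβ) := by
  have := gβ_lt_two
  rw [hGold, indicator_of_mem hx, indicator_of_notMem (fun h => hx.2.not_gt h.1),
    indicator_of_notMem (fun h => by linarith [hx.2, h.1])]
  ring

lemma hGold_of_mem_Ioo_gβ_sub_one_one (hx : x ∈ Ioo (gβ - 1) 1) :
    hGold p x = gβ ^ 2 / (1 + gβ ^ 2) := by
  rw [hGold, indicator_of_mem hx, indicator_of_notMem (fun h => hx.1.not_ge h.2),
    indicator_of_notMem (fun h => hx.2.not_ge h.1)]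
  ring

lemma hGold_of_mem_Icc_one_gβ (hx : x ∈ Icc 1 gβ) :
    hGold p x = gβ ^ 2 / (1 + gβ ^ 2) * (p * gβ) := by
  have := gβ_lt_two
  rw [hGold, indicator_of_mem hx, indicator_of_notMem (fun h => by linarith [hx.1, h.2]),
    indicator_of_notMem (fun h => h.2.not_ge hx.1)]
  ring

end Density

section FixedPoint

variable {p x : ℝ}

lemma randomPF_hGold_of_mem_Ioo_zero_gβ_sub_one (hx : x ∈ Ioo 0 (gβ - 1)) :
    randomPF p (hGold p) x = hGold p x := by
  obtain ⟨h0, h1⟩ := hx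
  have := one_lt_gβ; have := gβ_lt_two; have := gβ_sq
  rw [randomPF, fiber_Tlazy_of_lt h0 h1,
    fiber_Tgreedy_of_lt h0 (by linarith), tsum_singleton,
    tsum_pair (div_gβ_ne_add_one_div_gβ x), div_gβ x, div_gβ (x + 1),
    hGold_of_mem_Icc_zero_gβ_sub_one ⟨by positivity, by nlinarith⟩,
    hGold_of_mem_Ioo_gβ_sub_one_one ⟨by nlinarith, by nlinarith⟩,
    hGold_of_mem_Icc_zero_gβ_sub_one ⟨h0.le, h1.le⟩, one_div_gβ]
  linear_combination gβ ^ 2 / (1 + gβ ^ 2) * (1 - p) * gβ_sq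

lemma randomPF_hGold_of_mem_Ioo_gβ_sub_one_one (hx : x ∈ Ioo (gβ - 1) 1) :
    randomPF p (hGold p) x = hGold p x := by
  obtain ⟨h0, h1⟩ := hx
  have := one_lt_gβ; have := gβ_lt_two; have := gβ_sq
  rw [randomPF, fiber_Tlazy_of_gt h0 (by linarith),
    fiber_Tgreedy_of_lt (by linarith) h1,
    tsum_pair (div_gβ_ne_add_one_div_gβ x), div_gβ x, div_gβ (x + 1),
    hGold_of_mem_Icc_zero_gβ_sub_one ⟨by nlinarith, by nlinarith⟩,
    hGold_of_mem_Icc_one_gβ ⟨by nlinarith, by nlinarith⟩,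
    hGold_of_mem_Ioo_gβ_sub_one_one ⟨h0, h1⟩, one_div_gβ]
  linear_combination gβ ^ 2 / (1 + gβ ^ 2) * gβ_sq

lemma randomPF_hGold_of_mem_Ioo_one_gβ (hx : x ∈ Ioo 1 gβ) :
    randomPF p (hGold p) x = hGold p x := by
  obtain ⟨h0, h1⟩ := hx
  have := one_lt_gβ; have := gβ_lt_two; have := gβ_sq
  rw [randomPF, fiber_Tlazy_of_gt (by linarith) h1,
    fiber_Tgreedy_of_gt h0 h1, tsum_singleton,
    tsum_pair (div_gβ_ne_add_one_div_gβ x), div_gβ x, div_gβ (x + 1),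
    hGold_of_mem_Ioo_gβ_sub_one_one ⟨by nlinarith, by nlinarith⟩,
    hGold_of_mem_Icc_one_gβ ⟨by nlinarith, by nlinarith⟩,
    hGold_of_mem_Icc_one_gβ ⟨h0.le, h1.le⟩, one_div_gβ]
  linear_combination gβ ^ 2 / (1 + gβ ^ 2) * p * gβ_sq

end FixedPoint

theorem stmt_15_general (p : ℝ) :
    ∀ᵐ x ∂(volume.restrict (Icc (0:ℝ) gβ)),
      p * (1 / gβ) * (∑' y : {y : ℝ // y ∈ Icc (0:ℝ) gβ ∧ Tlazy y = x}, hGold p y.1) +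
        (1 - p) * (1 / gβ) *
          (∑' y : {y : ℝ // y ∈ Icc (0:ℝ) gβ ∧ Tgreedy y = x}, hGold p y.1) =
      hGold p x := by
  rw [← Measure.restrict_congr_set Ioo_ae_eq_Icc]
  filter_upwards [ae_restrict_mem measurableSet_Ioo,
    ae_restrict_of_ae ((toFinite {gβ - 1, 1}).countable.ae_notMem volume)]
    with x ⟨h0, hβ⟩ hx
  change randomPF p (hGold p) x = hGold p x
  simp only [mem_insert_iff, mem_singleton_iff, not_or] at hx
  rcases lt_or_gt_of_ne hx.1 with h1 | h1
  · exact randomPF_hGold_of_mem_Ioo_zero_gβ_sub_one ⟨h0, h1⟩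
  rcases lt_or_gt_of_ne hx.2 with h2 | h2
  · exact randomPF_hGold_of_mem_Ioo_gβ_sub_one_one ⟨h1, h2⟩
  · exact randomPF_hGold_of_mem_Ioo_one_gβ ⟨h2, hβ⟩

/-- for the golden mean `β`, the function `h` above is a fixed
point of the random Perron–Frobenius operator of the random lazy/greedy
β-system with probabilities `p` and `1−p`. -/
theorem stmt_15 (p : ℝ) (hp : p ∈ Icc (0:ℝ) 1) :
    ∀ᵐ x ∂(volume.restrict (Icc (0:ℝ) gβ)),
      p * (1 / gβ) * (∑' y : {y : ℝ // y ∈ Icc (0:ℝ) gβ ∧ Tlazy y = x}, hGold p y.1) +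
        (1 - p) * (1 / gβ) *
          (∑' y : {y : ℝ // y ∈ Icc (0:ℝ) gβ ∧ Tgreedy y = x}, hGold p y.1) =
      hGold p x :=
  stmt_15_general p

end
end

section
/- Let β = (1+√5)/2 and consider the random golden-mean β-system T₀ (lazy) and T₁ (greedy) with probabilities p and 1−p. Then KI₃(1) = pβ²/(β² − p(1−p)), where KI₃(y) is the total weighted mass of visits of the random orbit of y to the interval I₃ = (1, β]. -/
open Set

noncomputable section

/-- the lazy β-transformation for the golden mean (`z₂ = 1/(β(β−1)) = 1`). -/
def T0 (β x : ℝ) : ℝ := if x ≤ 1 then β * x else β * x - 1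

/-- the greedy β-transformation. -/
def T1 (β x : ℝ) : ℝ := if x < 1 / β then β * x else β * x - 1

/-- `T_b` with `b = false ↦ T₀` (probability `p`), `b = true ↦ T₁`
(probability `1−p`). -/
def Tb (β : ℝ) : Bool → ℝ → ℝ
  | false => T0 β
  | true => T1 β

/-- `T_ω = T_{ω_t} ∘ ⋯ ∘ T_{ω_1}`. -/
def wApply (β : ℝ) : List Bool → ℝ → ℝ
  | [], y => y
  | b :: ω, y => wApply β ω (Tb β b y)

/-- `p_{ω_1} ⋯ p_{ω_t}` with `p₀ = p`, `p₁ = 1−p`. -/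
def wWeight (p : ℝ) : List Bool → ℝ
  | [] => 1
  | b :: ω => (if b then 1 - p else p) * wWeight p ω

/-- `KI₃(y) = Σ_{t≥1} Σ_{ω∈{0,1}ᵗ} δ_ω(y,t)·1_{I₃}(T_{ω₁^{t−1}}(y))` with
`I₃ = (1, β]` and `δ_ω(y,t) = Π p_{ω_n}/β` (all slopes equal `β`). -/
def KI3 (β p y : ℝ) : ℝ :=
  ∑' ω : {ω : List Bool // ω ≠ []},
    if 1 < wApply β ω.1.dropLast y ∧ wApply β ω.1.dropLast y ≤ β then
      wWeight p ω.1 / β ^ ω.1.length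
    else 0


/-!
Summing over the last letter first, `KI₃(1)` is the total of `w(σ) φ^-(|σ|+1)` over the words `σ`
sending `1` into `I₃ = (1, φ]`. The orbit of `1` is explicit: `T₀ 1 = φ`, `T₁ 1 = φ⁻¹`,
`T₀ φ⁻¹ = 1`, `T₁ φ⁻¹ = 0`, and `φ`, `0` are fixed by both maps. So these words are exactly the
`(10)ᵏ0 ρ`, contributing `p^(k+1) (1-p)^k φ^-(2k+2) · w(ρ) φ^-|ρ|`. The words of each length have
total weight `1`, so `Σ_ρ w(ρ) φ^-|ρ| = (1 - φ⁻¹)⁻¹ = φ²`, and the sum over `k` is geometric.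
-/

open Real

open scoped goldenRatio ENNReal

lemma tsum_ofReal_geometric {a r : ℝ} (ha : 0 ≤ a) (hr₀ : 0 ≤ r) (hr₁ : r < 1) :
    ∑' k : ℕ, ENNReal.ofReal (a * r ^ k) = ENNReal.ofReal (a * (1 - r)⁻¹) := by
  rw [← ENNReal.ofReal_tsum_of_nonneg (fun k => by positivity)
    ((summable_geometric_of_lt_one hr₀ hr₁).mul_left a), tsum_mul_left,
    tsum_geometric_of_lt_one hr₀ hr₁]

lemma wApply_append (β : ℝ) (σ ρ : List Bool) (y : ℝ) :
    wApply β (σ ++ ρ) y = wApply β ρ (wApply β σ y) := by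
  induction σ generalizing y with
  | nil => rfl
  | cons b σ ih => exact ih _

lemma wWeight_eq_prod_map (p : ℝ) (ω : List Bool) :
    wWeight p ω = (ω.map fun b => if b then 1 - p else p).prod := by
  induction ω with
  | nil => rfl
  | cons b ω ih => simp [wWeight, ih]

lemma wWeight_append (p : ℝ) (σ ρ : List Bool) :
    wWeight p (σ ++ ρ) = wWeight p σ * wWeight p ρ := by
  simp only [wWeight_eq_prod_map, List.map_append, List.prod_append]

lemma wWeight_nonneg {p : ℝ} (hp : p ∈ Icc (0 : ℝ) 1) (ω : List Bool) : 0 ≤ wWeight p ω := by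
  rw [wWeight_eq_prod_map]
  refine List.prod_nonneg fun x hx => ?_
  obtain ⟨b, -, rfl⟩ := List.mem_map.1 hx
  cases b <;> simp [hp.1, hp.2]

lemma sum_wWeight_ofFn (p : ℝ) (n : ℕ) : ∑ v : Fin n → Bool, wWeight p (List.ofFn v) = 1 := by
  simp only [wWeight_eq_prod_map, List.map_ofFn, List.prod_ofFn, Function.comp_apply]
  rw [← Fintype.sum_pow (fun b : Bool => if b then 1 - p else p)]
  simp

lemma wWeight_append_false_add_append_true (p : ℝ) (σ : List Bool) :
    wWeight p (σ ++ [false]) + wWeight p (σ ++ [true]) = wWeight p σ := by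
  simp only [wWeight_append, wWeight, Bool.false_eq_true, ↓reduceIte, mul_one]
  ring

lemma tsum_ofReal_wWeight_div_pow {β p : ℝ} (hβ : 1 < β) (hp : p ∈ Icc (0 : ℝ) 1) :
    ∑' ρ : List Bool, ENNReal.ofReal (wWeight p ρ / β ^ ρ.length) =
      ENNReal.ofReal (1 - β⁻¹)⁻¹ := by
  have hlength (n : ℕ) : ∑' v : Fin n → Bool,
      ENNReal.ofReal (wWeight p (List.ofFn v) / β ^ (List.ofFn v).length) =
        ENNReal.ofReal (1 * β⁻¹ ^ n) := by
    rw [tsum_fintype, ← ENNReal.ofReal_sum_of_nonneg fun v _ =>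
      div_nonneg (wWeight_nonneg hp _) (by positivity)]
    simp_rw [List.length_ofFn, ← Finset.sum_div, sum_wWeight_ofFn, one_mul, inv_pow, one_div]
  rw [← List.equivSigmaTuple.symm.tsum_eq, ENNReal.tsum_sigma']
  simp_rw [List.equivSigmaTuple_symm_apply, hlength]
  rw [tsum_ofReal_geometric zero_le_one (by positivity) (inv_lt_one_of_one_lt₀ hβ), one_mul]

def equivDropLastGetLast (α : Type*) : {l : List α // l ≠ []} ≃ List α × α where
  toFun l := (l.1.dropLast, l.1.getLast l.2)
  invFun x := ⟨x.1 ++ [x.2], by simp⟩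
  left_inv l := Subtype.ext (List.dropLast_append_getLast l.2)
  right_inv x := by simp

/-- The total contribution to `KI3 β p y` of the words `σ ++ [b]`, `b : Bool`. -/
def visitMass (β p y : ℝ) (σ : List Bool) : ℝ≥0∞ :=
  if 1 < wApply β σ y ∧ wApply β σ y ≤ β then
    ENNReal.ofReal (wWeight p σ / β ^ (σ.length + 1))
  else 0

lemma KI3_eq_toReal_tsum_visitMass {β p : ℝ} (hβ : 0 < β) (hp : p ∈ Icc (0 : ℝ) 1) (y : ℝ) :
    KI3 β p y = (∑' σ, visitMass β p y σ).toReal := by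
  have hterm (ω : List Bool) (n : ℕ) : 0 ≤ wWeight p ω / β ^ n :=
    div_nonneg (wWeight_nonneg hp ω) (by positivity)
  -- in `ℝ≥0∞` sums of nonnegative terms can be regrouped without summability side conditions
  let F : {ω : List Bool // ω ≠ []} → ℝ≥0∞ := fun ω =>
    if 1 < wApply β ω.1.dropLast y ∧ wApply β ω.1.dropLast y ≤ β then
      ENNReal.ofReal (wWeight p ω.1 / β ^ ω.1.length)
    else 0
  have hKI3 : KI3 β p y = (∑' ω, F ω).toReal := by
    rw [ENNReal.tsum_toReal_eq fun ω => by simp only [F]; split <;> simp]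
    refine tsum_congr fun ω => ?_
    simp only [F]
    split <;> simp [hterm]
  rw [hKI3, ← (equivDropLastGetLast Bool).symm.tsum_eq, ENNReal.tsum_prod']
  congr 1
  refine tsum_congr fun σ => ?_
  simp only [tsum_bool, F, visitMass, equivDropLastGetLast, Equiv.coe_fn_symm_mk,
    List.dropLast_concat, List.length_append, List.length_singleton]
  split
  · rw [← ENNReal.ofReal_add (hterm _ _) (hterm _ _), ← add_div,
      wWeight_append_false_add_append_true]
  · simp

lemma Tb_zero {β : ℝ} (hβ : 0 < β) (b : Bool) : Tb β b 0 = 0 := by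
  cases b <;> simp [Tb, T0, T1, hβ]

lemma wApply_zero {β : ℝ} (hβ : 0 < β) (ω : List Bool) : wApply β ω 0 = 0 := by
  induction ω with
  | nil => rfl
  | cons b ω ih => rw [wApply, Tb_zero hβ, ih]

lemma inv_goldenRatio_eq_sub_one : φ⁻¹ = φ - 1 := by
  rw [inv_goldenRatio, ← one_sub_goldenConj]
  ring

lemma inv_goldenRatio_le_one : φ⁻¹ ≤ 1 :=
  inv_le_one_of_one_le₀ one_lt_goldenRatio.le

lemma one_sub_inv_goldenRatio : 1 - φ⁻¹ = (φ ^ 2)⁻¹ := by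
  rw [← inv_pow, inv_goldenRatio_eq_sub_one]
  linear_combination -goldenRatio_sq

lemma T1_goldenRatio_of_inv_le {x : ℝ} (hx : φ⁻¹ ≤ x) : T1 φ x = φ * x - 1 := by
  rw [T1, one_div, if_neg (not_lt.2 hx)]

lemma Tb_goldenRatio (b : Bool) : Tb φ b φ = φ := by
  have hφ : φ * φ - 1 = φ := by linarith [goldenRatio_sq]
  cases b
  · rw [Tb, T0, if_neg (not_le.2 one_lt_goldenRatio), hφ]
  · rw [Tb, T1_goldenRatio_of_inv_le (inv_goldenRatio_le_one.trans one_lt_goldenRatio.le), hφ]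

lemma wApply_goldenRatio (ω : List Bool) : wApply φ ω φ = φ := by
  induction ω with
  | nil => rfl
  | cons b ω ih => rw [wApply, Tb_goldenRatio, ih]

lemma T0_one (β : ℝ) : T0 β 1 = β := by simp [T0]

lemma T1_one_goldenRatio : T1 φ 1 = φ⁻¹ := by
  rw [T1_goldenRatio_of_inv_le inv_goldenRatio_le_one,
    inv_goldenRatio_eq_sub_one, mul_one]

lemma T0_inv_goldenRatio : T0 φ φ⁻¹ = 1 := by
  rw [T0, if_pos inv_goldenRatio_le_one, mul_inv_cancel₀ goldenRatio_ne_zero]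

lemma T1_inv_goldenRatio : T1 φ φ⁻¹ = 0 := by
  rw [T1_goldenRatio_of_inv_le le_rfl, mul_inv_cancel₀ goldenRatio_ne_zero, sub_self]

/-- The words `(10)ᵏ0` along which the orbit of `1` first enters `(1, φ]`. -/
def escapeWord : ℕ → List Bool
  | 0 => [false]
  | k + 1 => true :: false :: escapeWord k

lemma length_escapeWord (k : ℕ) : (escapeWord k).length = 2 * k + 1 := by
  induction k with
  | zero => rfl
  | succ k ih => rw [escapeWord, List.length_cons, List.length_cons, ih]; ring

lemma wWeight_escapeWord (p : ℝ) (k : ℕ) :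
    wWeight p (escapeWord k) = p ^ (k + 1) * (1 - p) ^ k := by
  induction k with
  | zero => simp [escapeWord, wWeight]
  | succ k ih => simp only [escapeWord, wWeight, ↓reduceIte, Bool.false_eq_true, ih]; ring

lemma wApply_escapeWord (k : ℕ) : wApply φ (escapeWord k) 1 = φ := by
  induction k with
  | zero => exact T0_one φ
  | succ k ih =>
    simp only [escapeWord, wApply, Tb]
    rw [T1_one_goldenRatio, T0_inv_goldenRatio, ih]

lemma escapeWord_append_injective :
    Function.Injective fun x : ℕ × List Bool => escapeWord x.1 ++ x.2 := by
  rintro ⟨k, ρ⟩ ⟨k', ρ'⟩ h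
  induction k generalizing k' with
  | zero => cases k' <;> simp_all [escapeWord]
  | succ k ih =>
    cases k' with
    | zero => simp [escapeWord] at h
    | succ k' =>
      simp only [escapeWord, List.cons_append, List.cons.injEq, true_and] at h
      simpa using ih k' h

lemma exists_escapeWord_append_of_one_lt_wApply :
    ∀ σ : List Bool, 1 < wApply φ σ 1 → ∃ k ρ, σ = escapeWord k ++ ρ
  | [], h => absurd h (lt_irrefl 1)
  | false :: ρ, _ => ⟨0, ρ, rfl⟩
  | [true], h => by
    rw [wApply, Tb, T1_one_goldenRatio] at h
    exact absurd h (not_lt.2 inv_goldenRatio_le_one)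
  | true :: true :: σ, h => by
    simp only [wApply, Tb, T1_one_goldenRatio, T1_inv_goldenRatio,
      wApply_zero goldenRatio_pos] at h
    exact absurd h (by norm_num)
  | true :: false :: σ, h => by
    simp only [wApply, Tb, T1_one_goldenRatio, T0_inv_goldenRatio] at h
    obtain ⟨k, ρ, rfl⟩ := exists_escapeWord_append_of_one_lt_wApply σ h
    exact ⟨k + 1, ρ, rfl⟩

lemma support_visitMass_subset (p : ℝ) :
    Function.support (visitMass φ p 1) ⊆
      range fun x : ℕ × List Bool => escapeWord x.1 ++ x.2 := by
  intro σ hσ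
  by_cases hI₃ : 1 < wApply φ σ 1 ∧ wApply φ σ 1 ≤ φ
  · obtain ⟨k, ρ, rfl⟩ := exists_escapeWord_append_of_one_lt_wApply σ hI₃.1
    exact ⟨(k, ρ), rfl⟩
  · exact absurd (if_neg hI₃) hσ

lemma wWeight_escapeWord_append_div_pow {β : ℝ} (hβ : β ≠ 0) (p : ℝ) (k : ℕ) (ρ : List Bool) :
    wWeight p (escapeWord k ++ ρ) / β ^ ((escapeWord k ++ ρ).length + 1) =
      p / β ^ 2 * (p * (1 - p) / β ^ 2) ^ k * (wWeight p ρ / β ^ ρ.length) := by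
  rw [wWeight_append, wWeight_escapeWord, List.length_append, length_escapeWord, div_pow, mul_pow,
    ← pow_mul]
  field_simp
  ring

lemma visitMass_escapeWord_append {p : ℝ} (hp : p ∈ Icc (0 : ℝ) 1) (k : ℕ) (ρ : List Bool) :
    visitMass φ p 1 (escapeWord k ++ ρ) =
      ENNReal.ofReal (p / φ ^ 2 * (p * (1 - p) / φ ^ 2) ^ k) *
        ENNReal.ofReal (wWeight p ρ / φ ^ ρ.length) := by
  have hp₀ : 0 ≤ p := hp.1
  have hp₁ : 0 ≤ 1 - p := sub_nonneg.2 hp.2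
  have hφ : wApply φ (escapeWord k ++ ρ) 1 = φ := by
    rw [wApply_append, wApply_escapeWord, wApply_goldenRatio]
  rw [visitMass, if_pos (by rw [hφ]; exact ⟨one_lt_goldenRatio, le_rfl⟩),
    ← ENNReal.ofReal_mul (by positivity)]
  exact congrArg _ (wWeight_escapeWord_append_div_pow goldenRatio_ne_zero p k ρ)

/-- for the golden mean `β` and the random lazy/greedy system with
probabilities `p, 1−p`, one has `KI₃(1) = pβ²/(β² − p(1−p))`. -/
theorem stmt_16 (β p : ℝ) (hβ : β = (1 + Real.sqrt 5) / 2) (hp : p ∈ Icc (0:ℝ) 1) :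
    KI3 β p 1 = p * β ^ 2 / (β ^ 2 - p * (1 - p)) := by
  obtain rfl : β = φ := hβ
  have hp₀ : 0 ≤ p := hp.1
  have hq : p * (1 - p) < φ ^ 2 := by
    nlinarith [hp.2, one_lt_pow₀ one_lt_goldenRatio two_ne_zero]
  have hr₀ : 0 ≤ p * (1 - p) / φ ^ 2 := div_nonneg (mul_nonneg hp₀ (sub_nonneg.2 hp.2)) (sq_nonneg φ)
  have hr₁ : p * (1 - p) / φ ^ 2 < 1 := (div_lt_one (by positivity)).2 hq
  rw [KI3_eq_toReal_tsum_visitMass goldenRatio_pos hp,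
    ← escapeWord_append_injective.tsum_eq (support_visitMass_subset p), ENNReal.tsum_prod']
  simp_rw [visitMass_escapeWord_append hp, ENNReal.tsum_mul_left,
    tsum_ofReal_wWeight_div_pow one_lt_goldenRatio hp, ENNReal.tsum_mul_right,
    tsum_ofReal_geometric (div_nonneg hp₀ (sq_nonneg φ)) hr₀ hr₁, one_sub_inv_goldenRatio, inv_inv]
  rw [← ENNReal.ofReal_mul (by positivity), ENNReal.toReal_ofReal (by positivity)]
  field_simp

end
end
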